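/- Let K be a field, m ≥ 1, and b₁, …, b_{2m+1} ∈ K pairwise distinct elements. Then the (2m+1) × (2m+1) matrix B with entries B_{pq} = Σ_{i=1}^{m} (b_p·b_q)^{2(i−1)}·(b_p − b_q) has rank exactly 2m. (This is the key rank computation, for even genus g = 2m + 2, showing that the skew-symmetrized Massey product associated to the quadratic relation built from the polynomials Hᵢ = t^{2(i−1)} on a hyperelliptic curve has rank 2g − 4.) -/

import Mathlib

/-!
Since `(b_p b_q)^{2i} (b_p - b_q) = b_p^{2i+1} b_q^{2i} - b_p^{2i} b_q^{2i+1}`, the matrix factors as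
`B = V J Vᵀ`, where `V` is the `(2m+1) × 2m` Vandermonde matrix of the monomials `1, t, …, t^{2m-1}`
evaluated at the `b_p`, and `J` is the block-diagonal sum of `m` copies of `!![0, -1; 1, 0]`.
As the `b_p` are distinct and `2m + 1 > 2m - 1`, a polynomial of degree `< 2m` vanishing at all of
them is zero, so `V` is injective; `J` is invertible since `J² = -1`. Hence
`rank B = rank (J Vᵀ) = rank Vᵀ = rank V = 2m`.
-/

open Polynomial

namespace Matrix

variable {R K ι κ l n : Type*}

theorem rank_mul_eq_right_of_injective [CommRing R] [Fintype l] [Fintype ι] [Fintype n]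
    {A : Matrix l ι R} (hA : Function.Injective A.mulVecLin) (X : Matrix ι n R) :
    (A * X).rank = X.rank := by
  rw [rank, rank, mulVecLin_mul, LinearMap.range_comp]
  exact (LinearEquiv.finrank_eq (Submodule.equivMapOfInjective _ hA _)).symm

theorem rank_eq_card_of_injective [Field K] [Fintype l] [Fintype ι] {A : Matrix l ι K}
    (hA : Function.Injective A.mulVecLin) : A.rank = Fintype.card ι := by
  rw [rank, LinearMap.finrank_range_of_inj hA, Module.finrank_fintype_fun_eq_card]

def powMatrix [Monoid R] (b : κ → R) (d : ι → ℕ) : Matrix κ ι R :=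
  of fun p i => b p ^ d i

theorem injective_mulVecLin_powMatrix [Field K] [Fintype κ] [Fintype ι] {b : κ → K}
    (hb : Function.Injective b) {d : ι → ℕ} (hd : Function.Injective d)
    (hdκ : ∀ i, d i < Fintype.card κ) :
    Function.Injective (powMatrix b d).mulVecLin := by
  classical
  rw [← LinearMap.ker_eq_bot, LinearMap.ker_eq_bot']
  intro x hx
  ext i
  have hP : ∑ j, C (x j) * X ^ d j = 0 := by
    refine eq_zero_of_natDegree_lt_card_of_eval_eq_zero _ hb (fun p => ?_) ?_
    · have hxp := congrFun hx p
      simp only [mulVecLin_apply, mulVec, dotProduct, powMatrix, of_apply, Pi.zero_apply] at hxp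
      simp only [eval_finsetSum, eval_mul, eval_C, eval_pow, eval_X]
      rw [← hxp]
      exact Finset.sum_congr rfl fun j _ => mul_comm _ _
    · have hκ : 0 < Fintype.card κ := (hdκ i).pos
      refine (natDegree_sum_le_of_forall_le _ _ (n := Fintype.card κ - 1) fun j _ => ?_).trans_lt
        (by omega)
      exact (natDegree_C_mul_X_pow_le _ _).trans (by have := hdκ j; omega)
  simpa [finsetSum_coeff, coeff_C_mul_X_pow, hd.eq_iff] using congrArg (coeff · (d i)) hP

def symplecticBlock (R : Type*) [Ring R] (m : ℕ) : Matrix (Fin 2 × Fin m) (Fin 2 × Fin m) R :=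
  blockDiagonal fun _ => !![0, -1; 1, 0]

theorem symplecticBlock_mul_self [CommRing R] (m : ℕ) :
    symplecticBlock R m * symplecticBlock R m = -1 := by
  rw [symplecticBlock, ← blockDiagonal_mul, ← blockDiagonal_one, ← blockDiagonal_neg]
  congr 1
  ext : 1
  exact Matrix.ext fun i j => by fin_cases i <;> fin_cases j <;> simp

theorem isUnit_det_symplecticBlock [CommRing R] (m : ℕ) : IsUnit (symplecticBlock R m).det :=
  isUnit_det_of_right_inverse (B := -symplecticBlock R m) (by
    rw [Matrix.mul_neg, symplecticBlock_mul_self, neg_neg])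

theorem of_sum_pow_mul_sub_eq [CommRing R] (b : κ → R) (m : ℕ) :
    (of fun p q => ∑ i ∈ Finset.range m, (b p * b q) ^ (2 * i) * (b p - b q)) =
      powMatrix b (fun k : Fin 2 × Fin m => 2 * k.2 + k.1) *
        (symplecticBlock R m * (powMatrix b fun k : Fin 2 × Fin m => 2 * k.2 + k.1)ᵀ) := by
  ext p q
  simp only [of_apply, mul_apply, transpose_apply, powMatrix, symplecticBlock, blockDiagonal_apply,
    Fintype.sum_prod_type, ite_mul, zero_mul, Finset.sum_ite_eq, Finset.mem_univ, if_true]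
  rw [← Fin.sum_univ_eq_sum_range (fun i => (b p * b q) ^ (2 * i) * (b p - b q)), Finset.sum_comm]
  refine Finset.sum_congr rfl fun i _ => ?_
  simp [Fin.sum_univ_two]
  ring

end Matrix

open Matrix

theorem stmt_15 {K : Type*} [Field K] (m : ℕ)
    (b : Fin (2 * m + 1) → K) (hb : Function.Injective b)
    (B : Matrix (Fin (2 * m + 1)) (Fin (2 * m + 1)) K)
    (hB : ∀ p q, B p q = ∑ i ∈ Finset.range m, (b p * b q) ^ (2 * i) * (b p - b q)) :
    B.rank = 2 * m := by
  have hd : Function.Injective fun k : Fin 2 × Fin m => 2 * (k.2 : ℕ) + k.1 := by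
    rintro ⟨e, i⟩ ⟨e', i'⟩ h
    simp only [Prod.mk.injEq, Fin.ext_iff] at h ⊢
    omega
  have hV := injective_mulVecLin_powMatrix hb hd fun k => by simp; omega
  obtain rfl : B = of fun p q => ∑ i ∈ Finset.range m, (b p * b q) ^ (2 * i) * (b p - b q) :=
    Matrix.ext hB
  rw [of_sum_pow_mul_sub_eq, rank_mul_eq_right_of_injective hV,
    rank_mul_eq_right_of_isUnit_det _ _ (isUnit_det_symplecticBlock m), rank_transpose,
    rank_eq_card_of_injective hV]
  simp [mul_comm]
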